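/- arXiv:2106.05048 — 2 statements merged into one kernel-verified Lean document; each statement's English description precedes it below -/
import Mathlib

section
/- Let Ω ⊆ ℝᵈ be open, h, 1/h ∈ L^∞(Ω) with h ≥ 0, B ∈ W^{1,∞}(Ω), and let Φ = Ψ_h(q, q_B) with q, q_B ∈ L²(Ω) and hq ∈ H¹(Ω), where Ψ_h(q,q_B) = ((∇(hq)+q_B∇B)/h, −q_B/h, −√3(2q−q_B)/h). Then for every V = (V₁,V₂,V₃) in the admissible space A_h with V₁ compactly supported in Ω, one has ⟨V, Φ⟩_h = ∫_Ω ∇·(hq V₁) dx = 0. In particular all boundary terms vanish under compact support. -/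
open MeasureTheory
open scoped RealInnerProductSpace

/-! Once the admissibility constraints are substituted for `V₂` and `V₃`, the integrand
`h (V₁·φ₁ + V₂ φ₂ + V₃ φ₃)` collapses pointwise to `hq ∇·V₁ + V₁·∇(hq) = ∇·(hq V₁)`: the
`√3` factors cancel, and so do the `q_B` terms. The divergence of a compactly supported
differentiable field integrates to zero, by the divergence theorem on a box containing its
support, whose faces the field does not reach. -/

noncomputable def divergence {ι : Type*} [Fintype ι] [DecidableEq ι]
    (F : EuclideanSpace ℝ ι → EuclideanSpace ℝ ι) (x : EuclideanSpace ℝ ι) : ℝ :=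
  ∑ i, fderiv ℝ F x (EuclideanSpace.single i 1) i

section Divergence

variable {ι : Type*} [Fintype ι] [DecidableEq ι]

theorem fderiv_apply_single_eq_gradient {f : EuclideanSpace ℝ ι → ℝ} (x : EuclideanSpace ℝ ι)
    (i : ι) : fderiv ℝ f x (EuclideanSpace.single i 1) = gradient f x i := by
  rw [← toDual_gradient, InnerProductSpace.toDual_apply_apply, EuclideanSpace.inner_single_right]
  simp

theorem divergence_smul {f : EuclideanSpace ℝ ι → ℝ} {V : EuclideanSpace ℝ ι → EuclideanSpace ℝ ι}
    {x : EuclideanSpace ℝ ι} (hf : DifferentiableAt ℝ f x) (hV : DifferentiableAt ℝ V x) :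
    divergence (fun y => f y • V y) x = f x * divergence V x + ⟪V x, gradient f x⟫ := by
  rw [divergence, divergence, fderiv_fun_smul hf hV]
  simp only [add_apply, FunLike.coe_smul, Pi.smul_apply, ContinuousLinearMap.smulRight_apply,
    PiLp.add_apply, PiLp.smul_apply, smul_eq_mul, fderiv_apply_single_eq_gradient,
    Finset.sum_add_distrib, ← Finset.mul_sum, PiLp.inner_apply, RCLike.inner_apply, conj_trivial]

theorem divergence_eq_zero_of_notMem_tsupport {F : EuclideanSpace ℝ ι → EuclideanSpace ℝ ι}
    {x : EuclideanSpace ℝ ι} (hx : x ∉ tsupport F) : divergence F x = 0 := by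
  simp [divergence, Function.notMem_support.mp fun h => hx (support_fderiv_subset ℝ h)]

end Divergence

theorem integral_divergence_eq_zero_of_hasCompactSupport {n : ℕ}
    {F : EuclideanSpace ℝ (Fin n) → EuclideanSpace ℝ (Fin n)}
    (hF : Differentiable ℝ F) (hFc : HasCompactSupport F) :
    ∫ x, divergence F x = 0 := by
  cases n with
  | zero => simp [divergence]
  | succ n =>
  by_cases hint : Integrable (divergence F)
  swap
  · exact integral_undef hint
  obtain ⟨C, hC⟩ := hFc.isBounded.exists_norm_le
  set R := max C 0 + 1
  have hnear : ∀ x ∈ tsupport F, ∀ i, |x i| < R := fun x hx i => by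
    have := (PiLp.norm_apply_le x i).trans (hC x hx)
    rw [Real.norm_eq_abs] at this
    linarith [le_max_left C 0]
  -- the coordinatewise order, so that `Set.Icc a b` is a box
  let _ : PartialOrder (EuclideanSpace ℝ (Fin (n + 1))) :=
    PartialOrder.lift (WithLp.ofLp (p := 2)) (WithLp.ofLp_injective 2)
  let eL := EuclideanSpace.equiv (Fin (n + 1)) ℝ
  let a := eL.symm fun _ => -R
  let b := eL.symm fun _ => R
  have hbox : ∀ x ∉ Set.Icc a b, divergence F x = 0 := fun x hx =>
    divergence_eq_zero_of_notMem_tsupport fun hxF => hx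
      ⟨fun i => (abs_lt.1 (hnear x hxF i)).1.le, fun i => (abs_lt.1 (hnear x hxF i)).2.le⟩
  rw [← setIntegral_eq_integral_of_forall_compl_eq_zero hbox,
    integral_divergence_of_hasFDerivAt_off_countable_of_equiv eL (fun _ _ => Iff.rfl)
      (EuclideanSpace.volume_preserving_symm_measurableEquiv_toLp (Fin (n + 1)))
      (fun i x => F x i) (fun i x => (EuclideanSpace.proj i).comp (fderiv ℝ F x))
      ∅ Set.countable_empty a b (fun _ => by change -R ≤ R; linarith [le_max_right C 0])
      (fun i => ((EuclideanSpace.proj i).continuous.comp hF.continuous).continuousOn)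
      (fun x _ i => (EuclideanSpace.proj (𝕜 := ℝ) i).hasFDerivAt.comp x (hF x).hasFDerivAt)
      (divergence F) (fun _ => rfl) hint.integrableOn]
  refine Finset.sum_eq_zero fun i _ => ?_
  have hface : ∀ r, R ≤ |r| → ∀ y, F (eL.symm (i.insertNth r y)) i = 0 := fun r hr y => by
    rw [image_eq_zero_of_notMem_tsupport fun hx => (hnear _ hx i).not_ge (by simpa [eL] using hr)]
    rfl
  simp [a, b, hface R (le_abs_self R), hface (-R) (by rw [abs_neg]; exact le_abs_self R)]

theorem weighted_pairing_Psi_admissible_eq {E : Type*} [NormedAddCommGroup E]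
    [InnerProductSpace ℝ E] (v G D : E) {h : ℝ} (hh : h ≠ 0) (q qB div : ℝ) :
    h * (⟪v, h⁻¹ • (G + qB • D)⟫ + (⟪v, D⟫ - h / 2 * div) * (-qB / h)
        + -(h / (2 * √3)) * div * (-√3 * (2 * q - qB) / h)) = h * q * div + ⟪v, G⟫ := by
  rw [inner_smul_right, inner_add_right, real_inner_smul_right]
  field_simp
  ring

theorem stmt6_general {d : ℕ} (Ω : Set (EuclideanSpace ℝ (Fin d)))
    (h q qB : EuclideanSpace ℝ (Fin d) → ℝ)
    (DB : EuclideanSpace ℝ (Fin d) → EuclideanSpace ℝ (Fin d))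
    (hpos : ∀ x, 0 < h x)
    -- `hq ∈ H¹(Ω)` (here realized through differentiability of `x ↦ h x * q x`)
    (hhq : Differentiable ℝ fun x => h x * q x)
    -- the components of `Φ = Ψ_h(q, q_B)`
    (φ₁ : EuclideanSpace ℝ (Fin d) → EuclideanSpace ℝ (Fin d))
    (φ₂ φ₃ : EuclideanSpace ℝ (Fin d) → ℝ)
    (hφ₁ : ∀ x, φ₁ x = (h x)⁻¹ • (gradient (fun y => h y * q y) x + qB x • DB x))
    (hφ₂ : ∀ x, φ₂ x = -(qB x) / h x)
    (hφ₃ : ∀ x, φ₃ x = -(Real.sqrt 3) * (2 * q x - qB x) / h x)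
    -- `V = (V₁,V₂,V₃)` admissible with `V₁` smooth and compactly supported in `Ω`
    (V₁ : EuclideanSpace ℝ (Fin d) → EuclideanSpace ℝ (Fin d))
    (V₂ V₃ divV₁ : EuclideanSpace ℝ (Fin d) → ℝ)
    (hV₁smooth : ContDiff ℝ 1 V₁) (hV₁cpt : HasCompactSupport V₁)
    (hV₁supp : tsupport V₁ ⊆ Ω)
    (hdivV₁ : ∀ x, divV₁ x = ∑ i, fderiv ℝ V₁ x (EuclideanSpace.single i 1) i)
    (hV₂ : ∀ x, V₂ x = ⟪V₁ x, DB x⟫ - (h x / 2) * divV₁ x)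
    (hV₃ : ∀ x, V₃ x = -(h x / (2 * Real.sqrt 3)) * divV₁ x) :
    (∫ x in Ω, h x * (⟪V₁ x, φ₁ x⟫ + V₂ x * φ₂ x + V₃ x * φ₃ x)) =
      (∫ x in Ω, ∑ i, fderiv ℝ (fun y => (h y * q y) • V₁ y) x (EuclideanSpace.single i 1) i) ∧
    (∫ x in Ω, h x * (⟪V₁ x, φ₁ x⟫ + V₂ x * φ₂ x + V₃ x * φ₃ x)) = 0 := by
  have hV₁ : Differentiable ℝ V₁ := hV₁smooth.differentiable one_ne_zero
  set F := fun y => (h y * q y) • V₁ y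
  have hpointwise : ∀ x, h x * (⟪V₁ x, φ₁ x⟫ + V₂ x * φ₂ x + V₃ x * φ₃ x) = divergence F x :=
    fun x => by
      rw [divergence_smul (hhq x) (hV₁ x), hφ₁, hφ₂, hφ₃, hV₂, hV₃, hdivV₁,
        weighted_pairing_Psi_admissible_eq _ _ _ (hpos x).ne']
      rfl
  have hpairing : (∫ x in Ω, h x * (⟪V₁ x, φ₁ x⟫ + V₂ x * φ₂ x + V₃ x * φ₃ x)) =
      ∫ x in Ω, divergence F x := by simp only [hpointwise]
  have hFΩ : tsupport F ⊆ Ω := (tsupport_smul_subset_right (fun y => h y * q y) V₁).trans hV₁supp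
  have hΩ_univ : ∫ x in Ω, divergence F x = ∫ x, divergence F x :=
    setIntegral_eq_integral_of_forall_compl_eq_zero fun x hx =>
      divergence_eq_zero_of_notMem_tsupport fun hxF => hx (hFΩ hxF)
  refine ⟨hpairing, ?_⟩
  rw [hpairing, hΩ_univ]
  exact integral_divergence_eq_zero_of_hasCompactSupport (fun x => (hhq x).smul (hV₁ x))
    (hV₁cpt.smul_left (f := fun y => h y * q y))

/-- For `Φ = Ψ_h(q, q_B)` with `hq ∈ H¹(Ω)` and any admissible `V = (V₁,V₂,V₃)`
with `V₁` compactly supported in `Ω`, the weighted inner product `⟨V,Φ⟩_h` equals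
`∫_Ω ∇·(hq V₁) dx`, which vanishes. -/
theorem stmt6 {d : ℕ} (Ω : Set (EuclideanSpace ℝ (Fin d))) (hΩ : IsOpen Ω)
    (h q qB : EuclideanSpace ℝ (Fin d) → ℝ)
    (DB : EuclideanSpace ℝ (Fin d) → EuclideanSpace ℝ (Fin d))
    (hmeas : Measurable h) (hpos : ∀ x, 0 < h x)
    (c C CB : ℝ) (hc : 0 < c)
    (hlow : ∀ᵐ x ∂(volume.restrict Ω), c ≤ h x)
    (hup : ∀ᵐ x ∂(volume.restrict Ω), h x ≤ C)
    (hDBbd : ∀ᵐ x ∂(volume.restrict Ω), ‖DB x‖ ≤ CB)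
    (hq2 : MemLp q 2 (volume.restrict Ω)) (hqB2 : MemLp qB 2 (volume.restrict Ω))
    -- `hq ∈ H¹(Ω)` (here realized through differentiability of `x ↦ h x * q x`)
    (hhq : Differentiable ℝ fun x => h x * q x)
    -- the components of `Φ = Ψ_h(q, q_B)`
    (φ₁ : EuclideanSpace ℝ (Fin d) → EuclideanSpace ℝ (Fin d))
    (φ₂ φ₃ : EuclideanSpace ℝ (Fin d) → ℝ)
    (hφ₁ : ∀ x, φ₁ x = (h x)⁻¹ • (gradient (fun y => h y * q y) x + qB x • DB x))
    (hφ₂ : ∀ x, φ₂ x = -(qB x) / h x)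
    (hφ₃ : ∀ x, φ₃ x = -(Real.sqrt 3) * (2 * q x - qB x) / h x)
    -- `V = (V₁,V₂,V₃)` admissible with `V₁` smooth and compactly supported in `Ω`
    (V₁ : EuclideanSpace ℝ (Fin d) → EuclideanSpace ℝ (Fin d))
    (V₂ V₃ divV₁ : EuclideanSpace ℝ (Fin d) → ℝ)
    (hV₁smooth : ContDiff ℝ 1 V₁) (hV₁cpt : HasCompactSupport V₁)
    (hV₁supp : tsupport V₁ ⊆ Ω)
    (hdivV₁ : ∀ x, divV₁ x = ∑ i, fderiv ℝ V₁ x (EuclideanSpace.single i 1) i)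
    (hV₂ : ∀ x, V₂ x = ⟪V₁ x, DB x⟫ - (h x / 2) * divV₁ x)
    (hV₃ : ∀ x, V₃ x = -(h x / (2 * Real.sqrt 3)) * divV₁ x) :
    (∫ x in Ω, h x * (⟪V₁ x, φ₁ x⟫ + V₂ x * φ₂ x + V₃ x * φ₃ x)) =
      (∫ x in Ω, ∑ i, fderiv ℝ (fun y => (h y * q y) • V₁ y) x (EuclideanSpace.single i 1) i) ∧
    (∫ x in Ω, h x * (⟪V₁ x, φ₁ x⟫ + V₂ x * φ₂ x + V₃ x * φ₃ x)) = 0 :=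
  stmt6_general Ω h q qB DB hpos hhq φ₁ φ₂ φ₃ hφ₁ hφ₂ hφ₃ V₁ V₂ V₃ divV₁ hV₁smooth hV₁cpt hV₁supp
    hdivV₁ hV₂ hV₃
end

section
/- In the fully discrete 1D scheme on cells indexed by a finite set with ghost cells: if at every boundary face f with interior cell k_i and ghost cell k_g the condition (h_{k_g} q_{k_g} u_{k_i} + h_{k_i} q_{k_i} u_{k_g})·ν_{k_i}^{k_g} = 0 holds, then the sum ⟨U,Φ⟩_h^δ = −Σ_{k} Σ_{f∈F_k} (h_{k_f} q_{k_f} u_k + h_k q_k u_{k_f})/2 · ν_k^{k_f} m_f over all cells vanishes, because interior face contributions cancel by antisymmetry ν_k^{k_f} = −ν_{k_f}^k and boundary face contributions vanish by assumption. -/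
/-!
The cell-`k` term of the sum is `F k - F (k - 1)`, where `F k = faceFlux h q u k` is the
symmetric flux through the face between cells `k` and `k + 1`: the normal `ν = ±1` makes the two
cells sharing a face count its flux with opposite signs. The sum over `1, …, N` telescopes to
`F N - F 0`, the fluxes through the two boundary faces, and these vanish by the boundary conditions.
-/

open Finset

theorem Int.sum_Icc_sub_sub_one {M : Type*} [AddCommGroup M] (g : ℤ → M) {m n : ℤ}
    (hmn : m ≤ n + 1) : ∑ k ∈ Icc m n, (g k - g (k - 1)) = g n - g (m - 1) := by
  induction n, (show m - 1 ≤ n by omega) using Int.leInduction with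
  | base => simp
  | succ n hn ih =>
    rw [← insert_Icc_right_eq_Icc_add_one (by omega), sum_insert (by simp),
      ih (by omega), add_sub_cancel_right]
    abel

noncomputable def faceFlux (h q u : ℤ → ℝ) (k : ℤ) : ℝ :=
  (h (k + 1) * q (k + 1) * u k + h k * q k * u (k + 1)) / 2

theorem cellFlux_eq_faceFlux_sub (h q u : ℤ → ℝ) (k : ℤ) :
    (h (k + 1) * q (k + 1) * u k + h k * q k * u (k + 1)) / 2 * 1 +
        (h (k - 1) * q (k - 1) * u k + h k * q k * u (k - 1)) / 2 * (-1) =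
      faceFlux h q u k - faceFlux h q u (k - 1) := by
  rw [faceFlux, faceFlux, sub_add_cancel]
  ring

/-- Fully discrete 1D orthogonality criterion: interior cells `1,…,N`, ghost cells
`0` and `N+1`.  If the projection condition holds at the two boundary faces, then
the face-flux sum `⟨U,Φ⟩_h^δ` over all cells vanishes (interior contributions
cancel by antisymmetry of the normals, boundary ones by assumption). -/
theorem stmt17 (N : ℤ) (hN : 1 ≤ N) (h q u : ℤ → ℝ)
    (hbL : h 0 * q 0 * u 1 + h 1 * q 1 * u 0 = 0)
    (hbR : h (N + 1) * q (N + 1) * u N + h N * q N * u (N + 1) = 0) :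
    -(∑ k ∈ Finset.Icc (1 : ℤ) N,
        ((h (k + 1) * q (k + 1) * u k + h k * q k * u (k + 1)) / 2 * 1 +
         (h (k - 1) * q (k - 1) * u k + h k * q k * u (k - 1)) / 2 * (-1))) = 0 := by
  have hF0 : faceFlux h q u 0 = 0 := by
    rw [faceFlux, zero_add, add_comm, hbL, zero_div]
  have hFN : faceFlux h q u N = 0 := by
    rw [faceFlux, hbR, zero_div]
  simp only [cellFlux_eq_faceFlux_sub]
  rw [Int.sum_Icc_sub_sub_one _ (by omega), sub_self, hFN, hF0, sub_zero, neg_zero]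
end
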